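/- arXiv:2006.10131 — 3 statements merged into one kernel-verified Lean document; each statement's English description precedes it below -/
import Mathlib

section
/- For the 2D multi-class traffic system U_t + A(U)U_x + B(U)U_y = 0 with A = Df, B = Dg, f(ρ,μ) = cˣ(1-(ρ+μ))·(ρ,μ) and g(ρ,μ) = cʸ(1-(ρ+μ))·(ρ,μ), the matrix C = κ₁A + κ₂B has eigenvalues λ₁ = (κ₁cˣ+κ₂cʸ)(1-(ρ+μ)) and λ₂ = (κ₁cˣ+κ₂cʸ)(1-2(ρ+μ)) for all (κ₁,κ₂) ∈ ℝ². -/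
open Polynomial

theorem Matrix.charpoly_fin_two_eq_of_trace_of_det {R : Type*} [CommRing R] [Nontrivial R]
    (M : Matrix (Fin 2) (Fin 2) R) {a b : R} (htrace : M.trace = a + b) (hdet : M.det = a * b) :
    M.charpoly = (X - C a) * (X - C b) := by
  rw [M.charpoly_fin_two, htrace, hdet, C_add, C_mul]
  ring

/-- The Jacobian of `(ρ, μ) ↦ (1 - (ρ + μ)) • (ρ, μ)`; the Jacobians of `f` and `g` are its
multiples by `cˣ` and `cʸ`. -/
def unitFluxJacobian (ρ μ : ℝ) : Matrix (Fin 2) (Fin 2) ℝ :=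
  !![1 - 2*ρ - μ, -ρ; -μ, 1 - ρ - 2*μ]

theorem trace_unitFluxJacobian (ρ μ : ℝ) :
    (unitFluxJacobian ρ μ).trace = (1 - (ρ + μ)) + (1 - 2*(ρ + μ)) := by
  rw [unitFluxJacobian, Matrix.trace_fin_two_of]
  ring

theorem det_unitFluxJacobian (ρ μ : ℝ) :
    (unitFluxJacobian ρ μ).det = (1 - (ρ + μ)) * (1 - 2*(ρ + μ)) := by
  rw [unitFluxJacobian, Matrix.det_fin_two_of]
  ring

theorem charpoly_smul_unitFluxJacobian (s ρ μ : ℝ) :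
    (s • unitFluxJacobian ρ μ).charpoly =
      (X - C (s * (1 - (ρ + μ)))) * (X - C (s * (1 - 2*(ρ + μ)))) := by
  apply Matrix.charpoly_fin_two_eq_of_trace_of_det
  · rw [Matrix.trace_smul, trace_unitFluxJacobian, smul_eq_mul]
    ring
  · rw [Matrix.det_smul, det_unitFluxJacobian, Fintype.card_fin]
    ring

/-- eigenvalues of C = κ₁A + κ₂B for the 2D multi-class LWR system. -/
theorem eigenvalues_of_C (cx cy ρ μ κ₁ κ₂ : ℝ)
    (A : Matrix (Fin 2) (Fin 2) ℝ)
    (B : Matrix (Fin 2) (Fin 2) ℝ)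
    (hA : A = !![cx * (1 - 2*ρ - μ), -cx * ρ; -cx * μ, cx * (1 - ρ - 2*μ)])
    (hB : B = !![cy * (1 - 2*ρ - μ), -cy * ρ; -cy * μ, cy * (1 - ρ - 2*μ)])
    (C : Matrix (Fin 2) (Fin 2) ℝ) (hC : C = κ₁ • A + κ₂ • B) :
    (Matrix.charpoly C).eval ((κ₁*cx + κ₂*cy) * (1 - (ρ + μ))) = 0 ∧
    (Matrix.charpoly C).eval ((κ₁*cx + κ₂*cy) * (1 - 2*(ρ + μ))) = 0 := by
  have hC' : C = (κ₁*cx + κ₂*cy) • unitFluxJacobian ρ μ := by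
    rw [hC, hA, hB, unitFluxJacobian]
    ext i j
    fin_cases i <;> fin_cases j <;> simp <;> ring
  rw [hC', charpoly_smul_unitFluxJacobian]
  simp
end

section
/- The eigenvalues λ₁ = (κ₁cˣ+κ₂cʸ)(1-(ρ+μ)) and λ₂ = (κ₁cˣ+κ₂cʸ)(1-2(ρ+μ)) of C = κ₁A + κ₂B are real for every (κ₁,κ₂), and they coincide if and only if (ρ,μ) = (0,0) or κ₁cˣ + κ₂cʸ = 0. -/
theorem mul_one_sub_eq_mul_one_sub_two_mul_iff {R : Type*} [CommRing R] (a s : R) :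
    a * (1 - s) = a * (1 - 2 * s) ↔ a * s = 0 := by
  rw [← sub_eq_zero, show a * (1 - s) - a * (1 - 2 * s) = a * s by ring]

theorem eigenvalues_real_and_coincide_iff_general (cx cy ρ μ κ₁ κ₂ : ℝ)
    (hρ : 0 ≤ ρ) (hμ : 0 ≤ μ)
    (l₁ l₂ : ℝ)
    (hl₁ : l₁ = (κ₁*cx + κ₂*cy) * (1 - (ρ + μ)))
    (hl₂ : l₂ = (κ₁*cx + κ₂*cy) * (1 - 2*(ρ + μ))) :
    (l₁ = l₂ ↔ (ρ = 0 ∧ μ = 0) ∨ κ₁*cx + κ₂*cy = 0) := by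
  rw [hl₁, hl₂, mul_one_sub_eq_mul_one_sub_two_mul_iff, mul_eq_zero,
    add_eq_zero_iff_of_nonneg hρ hμ, or_comm]

/-- the eigenvalues are real and coincide iff (ρ,μ)=(0,0) or κ₁cˣ+κ₂cʸ=0. -/
theorem eigenvalues_real_and_coincide_iff (cx cy ρ μ κ₁ κ₂ : ℝ)
    (hcx : cx ≠ 0) (hcy : cy ≠ 0) (hρ : 0 ≤ ρ) (hμ : 0 ≤ μ)
    (l₁ l₂ : ℝ)
    (hl₁ : l₁ = (κ₁*cx + κ₂*cy) * (1 - (ρ + μ)))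
    (hl₂ : l₂ = (κ₁*cx + κ₂*cy) * (1 - 2*(ρ + μ))) :
    (l₁ = l₂ ↔ (ρ = 0 ∧ μ = 0) ∨ κ₁*cx + κ₂*cy = 0) :=
  eigenvalues_real_and_coincide_iff_general cx cy ρ μ κ₁ κ₂ hρ hμ l₁ l₂ hl₁ hl₂
end

section
/- The fraction ρ/(ρ+μ) is transported with the characteristic speed λ₁: if (ρ,μ) is a C¹ solution of the 2D multi-class system with ρ+μ > 0, then the function φ = ρ/(ρ+μ) satisfies the transport equation φ_t + uˣφ_x + uʸφ_y = 0, where uˣ = cˣ(1-(ρ+μ)) and uʸ = cʸ(1-(ρ+μ)). -/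
/-! Both conservation laws share the velocity `u`, so in non-conservative form
`ρ_t + u·∇ρ = -ρ div u` and `μ_t + u·∇μ = -μ div u`: numerator and denominator of
`φ = ρ/(ρ+μ)` change at the same relative rate along the flow, hence `φ` is constant along it. -/

theorem HasDerivAt.div_add_self {f g : ℝ → ℝ} {f' g' a : ℝ} (hf : HasDerivAt f f' a)
    (hg : HasDerivAt g g' a) (h : f a + g a ≠ 0) :
    HasDerivAt (fun s => f s / (f s + g s)) ((f' * g a - f a * g') / (f a + g a) ^ 2) a :=
  (hf.div (hf.add hg) h).congr_deriv (by rw [Pi.add_apply]; ring)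

theorem hasDerivAt_mul_flux {f g h : ℝ → ℝ} {f' g' h' a : ℝ} (c : ℝ) (hf : HasDerivAt f f' a)
    (hg : HasDerivAt g g' a) (hh : HasDerivAt h h' a) :
    HasDerivAt (fun s => h s * (c * (1 - (f s + g s))))
      (h' * (c * (1 - (f a + g a))) + h a * (c * -(f' + g'))) a :=
  hh.mul (((hf.add hg).const_sub 1).const_mul c)

theorem transport_numerator_eq_zero {r m rt rx ry mt mx my ux uy dux duy : ℝ}
    (hr : rt + (rx * ux + r * dux) + (ry * uy + r * duy) = 0)
    (hm : mt + (mx * ux + m * dux) + (my * uy + m * duy) = 0) :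
    (rt * m - r * mt) + ux * (rx * m - r * mx) + uy * (ry * m - r * my) = 0 := by
  linear_combination m * hr - r * hm

/-- the fraction φ = ρ/(ρ+μ) is transported with speed (uˣ, uʸ):
φ_t + uˣφ_x + uʸφ_y = 0, where uˣ = cˣ(1-(ρ+μ)), uʸ = cʸ(1-(ρ+μ)). -/
theorem fraction_transport (cx cy : ℝ) (ρ μ : ℝ → ℝ → ℝ → ℝ)
    (hpos : ∀ t x y, 0 < ρ t x y + μ t x y)
    (hρt : ∀ t x y, DifferentiableAt ℝ (fun s => ρ s x y) t)
    (hρx : ∀ t x y, DifferentiableAt ℝ (fun s => ρ t s y) x)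
    (hρy : ∀ t x y, DifferentiableAt ℝ (fun s => ρ t x s) y)
    (hμt : ∀ t x y, DifferentiableAt ℝ (fun s => μ s x y) t)
    (hμx : ∀ t x y, DifferentiableAt ℝ (fun s => μ t s y) x)
    (hμy : ∀ t x y, DifferentiableAt ℝ (fun s => μ t x s) y)
    (heqρ : ∀ t x y,
      deriv (fun s => ρ s x y) t
      + deriv (fun s => ρ t s y * (cx * (1 - (ρ t s y + μ t s y)))) x
      + deriv (fun s => ρ t x s * (cy * (1 - (ρ t x s + μ t x s)))) y = 0)
    (heqμ : ∀ t x y,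
      deriv (fun s => μ s x y) t
      + deriv (fun s => μ t s y * (cx * (1 - (ρ t s y + μ t s y)))) x
      + deriv (fun s => μ t x s * (cy * (1 - (ρ t x s + μ t x s)))) y = 0) :
    ∀ t x y,
      deriv (fun s => ρ s x y / (ρ s x y + μ s x y)) t
      + cx * (1 - (ρ t x y + μ t x y)) * deriv (fun s => ρ t s y / (ρ t s y + μ t s y)) x
      + cy * (1 - (ρ t x y + μ t x y)) * deriv (fun s => ρ t x s / (ρ t x s + μ t x s)) y
      = 0 := by
  intro t x y
  have hs := (hpos t x y).ne'
  have ρt := (hρt t x y).hasDerivAt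
  have ρx := (hρx t x y).hasDerivAt
  have ρy := (hρy t x y).hasDerivAt
  have μt := (hμt t x y).hasDerivAt
  have μx := (hμx t x y).hasDerivAt
  have μy := (hμy t x y).hasDerivAt
  have hρ := heqρ t x y
  have hμ := heqμ t x y
  rw [(hasDerivAt_mul_flux cx ρx μx ρx).deriv, (hasDerivAt_mul_flux cy ρy μy ρy).deriv] at hρ
  rw [(hasDerivAt_mul_flux cx ρx μx μx).deriv, (hasDerivAt_mul_flux cy ρy μy μy).deriv] at hμ
  rw [(ρt.div_add_self μt hs).deriv, (ρx.div_add_self μx hs).deriv,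
    (ρy.div_add_self μy hs).deriv]
  field_simp
  linear_combination transport_numerator_eq_zero hρ hμ
end
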